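/- Let V, W be finite-dimensional complex vector spaces, let u : V → W and w : W → V be linear maps such that w ∘ u + Id_V is invertible, and let s : V → V be the unique linear map with spectrum contained in Σ₁ such that exp(2πi·s) = w ∘ u + Id_V. Then ψ(s) is invertible, and the map x := ψ(s)^{−1} ∘ w satisfies x ∘ u = s; in particular the spectrum of x ∘ u is contained in Σ₁. -/

import Mathlib

open Complex

noncomputable section

/-- The set Σ: complex numbers `α` with `-1 ≤ Re α ≤ 0`, `Im α ≥ 0` if `Re α = -1`,
and `Im α < 0` if `Re α = 0`. -/
def SigmaSet : Set ℂ :=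
  {α : ℂ | -1 ≤ α.re ∧ α.re ≤ 0 ∧ (α.re = -1 → 0 ≤ α.im) ∧ (α.re = 0 → α.im < 0)}

/-- The set Σ₁ := Σ + 1. -/
def Sigma1 : Set ℂ := {α : ℂ | α - 1 ∈ SigmaSet}

/-- The constant `2πi`. -/
def twoPiI : ℂ := 2 * Real.pi * Complex.I

/-- The exponential `exp(2πi·f)` of an endomorphism `f`. -/
def expEnd {E : Type*} [NormedAddCommGroup E] [NormedSpace ℂ E] (f : E →L[ℂ] E) :
    E →L[ℂ] E :=
  NormedSpace.exp (twoPiI • f)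

/-- The power series `ψ(A) := ∑_{k=1}^∞ ((2πi)^k / k!) A^(k-1)`. It satisfies
`A·ψ(A) = ψ(A)·A = exp(2πi·A) − Id`. -/
def psiEnd {E : Type*} [NormedAddCommGroup E] [NormedSpace ℂ E] (A : E →L[ℂ] E) :
    E →L[ℂ] E :=
  ∑' k : ℕ, ((twoPiI ^ (k + 1) / (Nat.factorial (k + 1) : ℂ)) • A ^ k)

/-!
`ψ(s)·s = exp(2πi·s) − 1 = w∘u`, so `x∘u = ψ(s)⁻¹ψ(s)s = s` once `ψ(s)` is invertible. The kernel
of `ψ(s)` is `s`-invariant, so if it were nonzero it would contain an eigenvector of `s`, with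
eigenvalue `α ∈ Σ₁` say, on which `ψ(s)` acts as the scalar `ψ(α)`. But `α ψ(α) = e^{2πiα} − 1`
vanishes only at integers, the only integer in `Σ₁` is `0`, and `ψ(0) = 2πi`.
-/

open scoped Nat

namespace Module.End

variable {K V : Type*} [Field K] [IsAlgClosed K] [AddCommGroup V] [Module K V]
  [FiniteDimensional K V]

theorem exists_hasEigenvector_mem_ker_of_commute {f g : End K V} (hfg : Commute f g)
    (hg : LinearMap.ker g ≠ ⊥) : ∃ μ v, f.HasEigenvector μ v ∧ g v = 0 := by
  have hmaps : ∀ v ∈ LinearMap.ker g, f v ∈ LinearMap.ker g := fun v hv => by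
    rw [LinearMap.mem_ker] at hv ⊢
    rw [← Module.End.mul_apply, ← hfg.eq, Module.End.mul_apply, hv, map_zero]
  have : Nontrivial (LinearMap.ker g) := Submodule.nontrivial_iff_ne_bot.mpr hg
  obtain ⟨μ, hμ⟩ := exists_eigenvalue (f.restrict hmaps)
  obtain ⟨v, hv⟩ := hμ.exists_hasEigenvector
  refine ⟨μ, v, ⟨?_, fun h => hv.2 (Subtype.ext h)⟩, v.2⟩
  simpa [mem_genEigenspace_one, LinearMap.coe_restrict_apply] using
    congrArg Subtype.val hv.apply_eq_smul

end Module.End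

section Psi

variable {𝔸 : Type*} [NormedRing 𝔸] [NormedAlgebra ℂ 𝔸]

/-- Stated in any normed `ℂ`-algebra, so that one series gives both `psiEnd` and its scalar
version `psi : ℂ → ℂ`. -/
def psi (a : 𝔸) : 𝔸 := ∑' k : ℕ, (twoPiI ^ (k + 1) / ((k + 1)! : ℂ)) • a ^ k

theorem psiEnd_eq_psi {E : Type*} [NormedAddCommGroup E] [NormedSpace ℂ E] (A : E →L[ℂ] E) :
    psiEnd A = psi A := rfl

theorem commute_psi_self (a : 𝔸) : Commute a (psi a) :=
  Commute.tsum_right a fun k => ((Commute.refl a).pow_right k).smul_right _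

variable [CompleteSpace 𝔸]

theorem summable_psi_series (a : 𝔸) :
    Summable fun k : ℕ => (twoPiI ^ (k + 1) / ((k + 1)! : ℂ)) • a ^ k := by
  set r := ‖twoPiI‖
  refine (summable_nat_add_iff 1).mp <| Summable.of_norm_bounded
    (((summable_nat_add_iff 1).mpr (Real.summable_pow_div_factorial (r * ‖a‖))).mul_left r)
    fun k => ?_
  have hfac : ((k + 1)! : ℝ) ≤ (k + 1 + 1)! := by exact_mod_cast Nat.factorial_le (by omega)
  calc ‖(twoPiI ^ (k + 1 + 1) / ((k + 1 + 1)! : ℂ)) • a ^ (k + 1)‖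
      ≤ r ^ (k + 1 + 1) / (k + 1 + 1)! * ‖a‖ ^ (k + 1) := by
        refine (norm_smul_le _ _).trans ?_
        rw [norm_div, norm_pow, Complex.norm_natCast]
        gcongr
        exact norm_pow_le' a k.succ_pos
    _ ≤ r ^ (k + 1 + 1) / (k + 1)! * ‖a‖ ^ (k + 1) := by gcongr
    _ = r * ((r * ‖a‖) ^ (k + 1) / (k + 1)!) := by ring

theorem psi_mul_self (a : 𝔸) : psi a * a = NormedSpace.exp (twoPiI • a) - 1 := by
  rw [congrFun (NormedSpace.exp_eq_tsum ℂ) (twoPiI • a),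
    (NormedSpace.expSeries_summable' (twoPiI • a)).tsum_eq_zero_add, pow_zero,
    Nat.factorial_zero, Nat.cast_one, inv_one, one_smul, add_sub_cancel_left, psi,
    ← (summable_psi_series a).tsum_mul_right]
  congr 1 with k
  rw [smul_mul_assoc, ← pow_succ, smul_pow, smul_smul, div_eq_inv_mul]

end Psi

theorem twoPiI_ne_zero : twoPiI ≠ 0 := by
  simp [twoPiI, Complex.I_ne_zero, Real.pi_ne_zero]

theorem psi_zero : psi (0 : ℂ) = twoPiI := by
  rw [psi, tsum_eq_single 0 fun k hk => by rw [zero_pow hk, smul_zero]]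
  simp

theorem eq_zero_of_intCast_mem_Sigma1 {n : ℤ} (hn : (n : ℂ) ∈ Sigma1) : n = 0 := by
  obtain ⟨hlo, hhi, -, hre⟩ := hn
  simp only [Complex.sub_re, Complex.intCast_re, Complex.one_re, Complex.sub_im,
    Complex.intCast_im, Complex.one_im, sub_zero] at hlo hhi hre
  have h0 : (0 : ℤ) ≤ n := by exact_mod_cast (by linarith : (0 : ℝ) ≤ n)
  have h1 : n ≤ 1 := by exact_mod_cast (by linarith : (n : ℝ) ≤ 1)
  obtain rfl | rfl : n = 0 ∨ n = 1 := by omega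
  · rfl
  · norm_num at hre

theorem psi_ne_zero_of_mem_Sigma1 {α : ℂ} (hα : α ∈ Sigma1) : psi α ≠ 0 := by
  rcases eq_or_ne α 0 with rfl | hα0
  · exact psi_zero ▸ twoPiI_ne_zero
  intro hψ
  have hexp : Complex.exp (twoPiI * α) = 1 := by
    have := psi_mul_self α
    rw [hψ, zero_mul, ← Complex.exp_eq_exp_ℂ, smul_eq_mul] at this
    exact sub_eq_zero.mp this.symm
  obtain ⟨n, hn⟩ := Complex.exp_eq_one_iff.mp hexp
  have hαn : α = n := mul_left_cancel₀ twoPiI_ne_zero (by rw [hn, twoPiI]; ring)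
  subst hαn
  exact hα0 (by rw [eq_zero_of_intCast_mem_Sigma1 hα, Int.cast_zero])

section Operator

variable {E : Type*} [NormedAddCommGroup E] [NormedSpace ℂ E] [CompleteSpace E]

theorem psi_apply_of_hasEigenvector {A : E →L[ℂ] E} {μ : ℂ} {v : E}
    (hv : Module.End.HasEigenvector (A : Module.End ℂ E) μ v) : psi A v = psi μ • v := by
  calc psi A v = ∑' k : ℕ, (twoPiI ^ (k + 1) / ((k + 1)! : ℂ)) • (A ^ k) v :=
        (ContinuousLinearMap.apply ℂ E v).map_tsum (summable_psi_series A)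
    _ = ∑' k : ℕ, (twoPiI ^ (k + 1) / ((k + 1)! : ℂ) * μ ^ k) • v := by
        congr 1 with k
        rw [mul_smul, ← hv.pow_apply k, ← ContinuousLinearMap.toLinearMap_pow]
        rfl
    _ = psi μ • v := (summable_psi_series μ).tsum_smul_const v

theorem isUnit_psi_of_spectrum_subset_Sigma1 [FiniteDimensional ℂ E] {A : E →L[ℂ] E}
    (hA : spectrum ℂ A ⊆ Sigma1) : IsUnit (psi A) := by
  rw [ContinuousLinearMap.isUnit_iff_isUnit_toLinearMap, LinearMap.isUnit_iff_ker_eq_bot]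
  by_contra hker
  obtain ⟨μ, v, hv, hψv⟩ := Module.End.exists_hasEigenvector_mem_ker_of_commute
    (congrArg ContinuousLinearMap.toLinearMap (commute_psi_self A).eq) hker
  have hμ : μ ∈ spectrum ℂ A := by
    rw [ContinuousLinearMap.spectrum_eq]
    exact (Module.End.hasEigenvalue_of_hasEigenvector hv).mem_spectrum
  have : psi μ • v = 0 := (psi_apply_of_hasEigenvector hv).symm.trans hψv
  exact hv.2 ((smul_eq_zero.mp this).resolve_left (psi_ne_zero_of_mem_Sigma1 (hA hμ)))

end Operator

theorem psi_inv_comp_w_comp_u_eq_s_general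
    {V W : Type*} [NormedAddCommGroup V] [NormedSpace ℂ V] [FiniteDimensional ℂ V]
    [NormedAddCommGroup W] [NormedSpace ℂ W]
    (u : V →L[ℂ] W) (w : W →L[ℂ] V)
    (s : V →L[ℂ] V) (hs : spectrum ℂ s ⊆ Sigma1)
    (hes : expEnd s = w.comp u + ContinuousLinearMap.id ℂ V) :
    IsUnit (psiEnd s) ∧
    ((Ring.inverse (psiEnd s)).comp w).comp u = s ∧
    spectrum ℂ (((Ring.inverse (psiEnd s)).comp w).comp u) ⊆ Sigma1 := by
  have : CompleteSpace V := FiniteDimensional.complete ℂ V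
  have hψ : IsUnit (psiEnd s) := isUnit_psi_of_spectrum_subset_Sigma1 hs
  have hψs : psiEnd s * s = w.comp u := by
    rw [psiEnd_eq_psi, psi_mul_self, ← expEnd, hes, ContinuousLinearMap.one_def,
      add_sub_cancel_right]
  have hxu : ((Ring.inverse (psiEnd s)).comp w).comp u = s := by
    rw [ContinuousLinearMap.comp_assoc, ← ContinuousLinearMap.mul_def, ← hψs, ← mul_assoc,
      Ring.inverse_mul_cancel _ hψ, one_mul]
  exact ⟨hψ, hxu, by rw [hxu]; exact hs⟩

/-- Let `w∘u + Id` be invertible and let `s` be the unique endomorphism with spectrum in Σ₁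
and `exp(2πi·s) = w∘u + Id`. Then `ψ(s)` is invertible and `x := ψ(s)⁻¹ ∘ w` satisfies
`x∘u = s`; in particular the spectrum of `x∘u` is contained in Σ₁. -/
theorem psi_inv_comp_w_comp_u_eq_s
    {V W : Type*} [NormedAddCommGroup V] [NormedSpace ℂ V] [FiniteDimensional ℂ V]
    [NormedAddCommGroup W] [NormedSpace ℂ W] [FiniteDimensional ℂ W]
    (u : V →L[ℂ] W) (w : W →L[ℂ] V)
    (hinv : IsUnit (w.comp u + ContinuousLinearMap.id ℂ V))
    (s : V →L[ℂ] V) (hs : spectrum ℂ s ⊆ Sigma1)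
    (hes : expEnd s = w.comp u + ContinuousLinearMap.id ℂ V) :
    IsUnit (psiEnd s) ∧
    ((Ring.inverse (psiEnd s)).comp w).comp u = s ∧
    spectrum ℂ (((Ring.inverse (psiEnd s)).comp w).comp u) ⊆ Sigma1 :=
  psi_inv_comp_w_comp_u_eq_s_general u w s hs hes
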